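/- arXiv:2007.09962 — 2 statements merged into one kernel-verified Lean document; each statement's English description precedes it below -/
import Mathlib

section
/- Let T be a form of degree d in m+1 variables and let A, B be two non-redundant decompositions of T with A ∩ B = ∅. Then Z = A ∪ B satisfies the Cayley–Bacharach property CB(d). -/
open MvPolynomial
open scoped Classical

noncomputable section

/-- Points of the projective space `ℙ^m` over `ℂ`. -/
abbrev Pt (m : ℕ) := Projectivization ℂ (Fin (m + 1) → ℂ)

/-- The linear form with coefficient vector `v`. -/
def linForm {m : ℕ} (v : Fin (m + 1) → ℂ) : MvPolynomial (Fin (m + 1)) ℂ :=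
  ∑ i, C (v i) * X i

/-- The degree-`d` Veronese image of a projective point, i.e. the `d`-th power `L^d`
of a linear form `L` representing the point. -/
def powRep {m : ℕ} (d : ℕ) (P : Pt m) : MvPolynomial (Fin (m + 1)) ℂ :=
  linForm P.rep ^ d

/-- `A ⊆ ℙ^m` is a decomposition of the form `T` of degree `d`:
`T = a_1 L_1^d + ⋯ + a_r L_r^d`. -/
def IsDecomp {m : ℕ} (d : ℕ) (A : Finset (Pt m))
    (T : MvPolynomial (Fin (m + 1)) ℂ) : Prop :=
  ∃ a : Pt m → ℂ, T = ∑ P ∈ A, a P • powRep d P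

/-- A decomposition is non-redundant if `T` is not in the span of `ν_d(A')`
for any proper subset `A' ⊊ A`. -/
def NonRedundant {m : ℕ} (d : ℕ) (A : Finset (Pt m))
    (T : MvPolynomial (Fin (m + 1)) ℂ) : Prop :=
  ∀ A' : Finset (Pt m), A' ⊂ A →
    T ∉ Submodule.span ℂ (powRep d '' (A' : Set (Pt m)))

/-- The Cayley–Bacharach property `CB(d)`. -/
def CB {m : ℕ} (d : ℕ) (Z : Finset (Pt m)) : Prop :=
  ∀ P ∈ Z, ∀ F : MvPolynomial (Fin (m + 1)) ℂ, F.IsHomogeneous d →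
    (∀ Q ∈ Z.erase P, eval Q.rep F = 0) → eval P.rep F = 0

/-- The `d`-th Kruskal rank of a finite set `Z ⊂ ℙ^m`: the largest `k` (at most `ℓ(Z)`)
such that the Veronese images of every subset of `Z` of cardinality at most `k`
are linearly independent. -/
def kruskalRank {m : ℕ} (d : ℕ) (Z : Finset (Pt m)) : ℕ :=
  sSup {k | k ≤ Z.card ∧ ∀ S ⊆ Z, S.card ≤ k →
    LinearIndependent ℂ (fun P : S => powRep d P.1)}

/-- The evaluation map of degree `d` on (representatives of) the points of `Z`. -/
def evalMap {m : ℕ} (Z : Finset (Pt m)) (d : ℕ) :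
    homogeneousSubmodule (Fin (m + 1)) ℂ d →ₗ[ℂ] (Z → ℂ) where
  toFun F P := eval (P : Pt m).rep F.1
  map_add' F G := by funext P; simp
  map_smul' c F := by funext P; simp [smul_eq_C_mul]

/-- The Hilbert function of a finite set of points `Z ⊂ ℙ^m`. -/
def hf {m : ℕ} (Z : Finset (Pt m)) (d : ℕ) : ℕ :=
  Module.finrank ℂ (LinearMap.range (evalMap Z d))

/-- The first difference of the Hilbert function (with `h_Z(j) = 0` for `j < 0`). -/
def Dhf {m : ℕ} (Z : Finset (Pt m)) (j : ℕ) : ℤ :=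
  if j = 0 then (hf Z 0 : ℤ) else (hf Z j : ℤ) - (hf Z (j - 1) : ℤ)

/-! The apolarity pairing `⟨F, G⟩ = ∑_α α! F_α G_α` satisfies `⟨F, L_v^d⟩ = d! F(v)` for `F` of
degree `d`, so a form `F` vanishing on `Z ∖ {P}` gives a functional `⟨F, -⟩` killing `L_Q^d` for
all `Q ∈ Z ∖ {P}`. If `P ∈ A`, it kills all of `B`, hence `T`; as `P` enters the non-redundant
decomposition `A` of `T` with a nonzero coefficient, it then kills `L_P^d` too, i.e. `F(P) = 0`. -/

def apolarPairing {σ R : Type*} [CommSemiring R] (F : MvPolynomial σ R) :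
    MvPolynomial σ R →ₗ[R] R :=
  ∑ α ∈ F.support, (coeff α F * α.prod fun _ k => (k.factorial : R)) • lcoeff R α

theorem apolarPairing_sum_smul_X_pow {σ R : Type*} [CommSemiring R] [Fintype σ]
    {F : MvPolynomial σ R} {d : ℕ} (hF : F.IsHomogeneous d) (v : σ → R) :
    apolarPairing F ((∑ i, v i • X i) ^ d) = d.factorial * eval v F := by
  rw [eval_eq, Finset.mul_sum, apolarPairing, LinearMap.sum_apply]
  refine Finset.sum_congr rfl fun α hα => ?_
  have hdeg : α.sum (fun _ k => k) = d := by
    rw [← hF (mem_support_iff.mp hα), Finsupp.weight_apply]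
    simp
  have hfac : (α.prod fun _ k => (k.factorial : R)) * α.multinomial = d.factorial := by
    rw [← hdeg, Finsupp.multinomial_eq]
    simp only [Finsupp.prod, Finsupp.sum]
    rw [← Nat.cast_prod, ← Nat.cast_mul, Nat.multinomial_spec]
  rw [LinearMap.smul_apply, lcoeff_apply, coeff_linearCombination_X_pow_of_fintype, if_pos hdeg,
    smul_eq_mul, ← hfac]
  simp only [Finsupp.prod]
  ring

theorem apolarPairing_powRep {m d : ℕ} {F : MvPolynomial (Fin (m + 1)) ℂ}
    (hF : F.IsHomogeneous d) (P : Pt m) :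
    apolarPairing F (powRep d P) = d.factorial * eval P.rep F := by
  simpa [powRep, linForm, smul_eq_C_mul] using apolarPairing_sum_smul_X_pow hF P.rep

section Decompositions

variable {m d : ℕ} {A : Finset (Pt m)} {T : MvPolynomial (Fin (m + 1)) ℂ}

theorem IsDecomp.map_eq_zero (hA : IsDecomp d A T) {φ : MvPolynomial (Fin (m + 1)) ℂ →ₗ[ℂ] ℂ}
    (hφ : ∀ Q ∈ A, φ (powRep d Q) = 0) : φ T = 0 := by
  obtain ⟨a, rfl⟩ := hA
  simp only [map_sum, map_smul]
  exact Finset.sum_eq_zero fun Q hQ => by rw [hφ Q hQ, smul_zero]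

theorem NonRedundant.coeff_ne_zero (hnr : NonRedundant d A T) {a : Pt m → ℂ}
    (ha : T = ∑ Q ∈ A, a Q • powRep d Q) {P : Pt m} (hP : P ∈ A) : a P ≠ 0 := by
  intro haP
  refine hnr (A.erase P) (Finset.erase_ssubset hP) ?_
  rw [ha, ← Finset.add_sum_erase _ _ hP, haP, zero_smul, zero_add]
  exact Submodule.sum_mem _ fun Q hQ =>
    Submodule.smul_mem _ _ (Submodule.subset_span ⟨Q, hQ, rfl⟩)

theorem NonRedundant.map_powRep_eq_zero (hnr : NonRedundant d A T) (hA : IsDecomp d A T)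
    {φ : MvPolynomial (Fin (m + 1)) ℂ →ₗ[ℂ] ℂ} (hT : φ T = 0) {P : Pt m} (hP : P ∈ A)
    (hφ : ∀ Q ∈ A.erase P, φ (powRep d Q) = 0) : φ (powRep d P) = 0 := by
  obtain ⟨a, ha⟩ := hA
  have hsum : φ T = a P * φ (powRep d P) := by
    rw [ha, map_sum, Finset.sum_eq_single_of_mem P hP fun Q hQ hQP => ?_, map_smul, smul_eq_mul]
    rw [map_smul, hφ Q (Finset.mem_erase.mpr ⟨hQP, hQ⟩), smul_zero]
  rw [hsum] at hT
  exact (mul_eq_zero.mp hT).resolve_left (hnr.coeff_ne_zero ha hP)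

end Decompositions

theorem eval_eq_zero_of_nonRedundant_of_notMem {m d : ℕ} {T : MvPolynomial (Fin (m + 1)) ℂ}
    {A B : Finset (Pt m)} (hA : IsDecomp d A T) (hAnr : NonRedundant d A T)
    (hB : IsDecomp d B T) {P : Pt m} (hPA : P ∈ A) (hPB : P ∉ B)
    {F : MvPolynomial (Fin (m + 1)) ℂ} (hF : F.IsHomogeneous d)
    (hvan : ∀ Q ∈ (A ∪ B).erase P, eval Q.rep F = 0) : eval P.rep F = 0 := by
  have hφ : ∀ Q ∈ (A ∪ B).erase P, apolarPairing F (powRep d Q) = 0 := fun Q hQ => by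
    rw [apolarPairing_powRep hF, hvan Q hQ, mul_zero]
  have hT : apolarPairing F T = 0 := hB.map_eq_zero fun Q hQ =>
    hφ Q (Finset.mem_erase.mpr ⟨fun h => hPB (h ▸ hQ), Finset.mem_union_right _ hQ⟩)
  have hP := hAnr.map_powRep_eq_zero hA hT hPA fun Q hQ =>
    hφ Q (Finset.erase_subset_erase P Finset.subset_union_left hQ)
  rw [apolarPairing_powRep hF] at hP
  exact (mul_eq_zero.mp hP).resolve_left (Nat.cast_ne_zero.mpr d.factorial_ne_zero)

theorem stmt9_general (m d : ℕ) (T : MvPolynomial (Fin (m + 1)) ℂ)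
    (A B : Finset (Pt m))
    (hA : IsDecomp d A T) (hAnr : NonRedundant d A T)
    (hB : IsDecomp d B T) (hBnr : NonRedundant d B T)
    (hAB : A ∩ B = ∅) :
    CB d (A ∪ B) := by
  intro P hP F hF hvan
  rcases Finset.mem_union.mp hP with hPA | hPB
  · exact eval_eq_zero_of_nonRedundant_of_notMem hA hAnr hB hPA
      (Finset.disjoint_left.mp (Finset.disjoint_iff_inter_eq_empty.mpr hAB) hPA) hF hvan
  · refine eval_eq_zero_of_nonRedundant_of_notMem hB hBnr hA hPB
      (Finset.disjoint_right.mp (Finset.disjoint_iff_inter_eq_empty.mpr hAB) hPB) hF ?_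
    rwa [Finset.union_comm]

/-- If `A`, `B` are disjoint non-redundant decompositions of a form `T` of
degree `d`, then `Z = A ∪ B` satisfies the Cayley–Bacharach property `CB(d)`. -/
theorem stmt9 (m d : ℕ) (T : MvPolynomial (Fin (m + 1)) ℂ) (hT0 : T ≠ 0)
    (hThom : T.IsHomogeneous d)
    (A B : Finset (Pt m))
    (hA : IsDecomp d A T) (hAnr : NonRedundant d A T)
    (hB : IsDecomp d B T) (hBnr : NonRedundant d B T)
    (hAB : A ∩ B = ∅) :
    CB d (A ∪ B) :=
  stmt9_general m d T A B hA hAnr hB hBnr hAB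

end
end

section
/- Fix n ∈ ℕ and set d = 8+2n. Let A ⊂ ℙ^2 be a finite set contained in a smooth plane cubic curve C (the zero locus of a homogeneous polynomial F of degree 3 whose gradient does not vanish at any point of C). Then for every partition d = b_1 + b_2 + b_3 with b_1, b_2, b_3 ≥ 1, one has (k_{b_1}(A) + k_{b_2}(A) + k_{b_3}(A) − 2)/2 ≤ 11 + 3n; in particular, the reshaped Kruskal criterion cannot certify identifiability of any decomposition of length r > 11+3n whose points lie on a smooth cubic curve. -/
open MvPolynomial
open scoped Classical

noncomputable section

/-!
Linear independence of the powers `ℓ_P^b` (`P ∈ S`) implies linear independence of the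
evaluation functionals at the points of `S` on forms of degree `b`, since evaluating
`∑ c_P ℓ_P^b` at `w` is the same as applying `∑ c_P ev_P` to `ℓ_w^b`. If `S` lies on the cubic
`F = 0`, these functionals vanish on the forms `F · G`, so `|S|` is at most the codimension of
`F · S_{b-3}` in `S_b`, which is `binom(b+2,2) - binom(b-1,2) = 3b` (and `dim S_b ≤ 3b` when
`b ≤ 2`). Hence `k_b(A) ≤ 3b` for every `b ≥ 1`, and summing over `b₁ + b₂ + b₃ = 8 + 2n` gives
the bound.
-/

open Module

namespace MvPolynomial

variable {σ K : Type*} [Field K]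

instance [Finite σ] (d : ℕ) : FiniteDimensional K (homogeneousSubmodule σ K d) :=
  Module.Finite.iff_fg.mpr (homogeneousSubmodule_fg σ K d)

def symEquivDegreeEq (σ : Type*) (d : ℕ) : Sym σ d ≃ {x : σ →₀ ℕ | x.degree = d} :=
  (Sym.equivNatSum σ d).trans <| Equiv.subtypeEquivRight fun x => by
    simp [Finsupp.degree_apply, Finsupp.sum]

theorem finrank_homogeneousSubmodule [Fintype σ] (d : ℕ) :
    finrank K (homogeneousSubmodule σ K d) = (Fintype.card σ + d - 1).choose d := by
  have : Fintype {x : σ →₀ ℕ | x.degree = d} := Fintype.ofEquiv _ (symEquivDegreeEq σ d)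
  rw [homogeneousSubmodule_eq_finsupp_supported,
    (AddMonoidAlgebra.supportedEquivFinsupp _).finrank_eq, finrank_finsupp_self,
    ← Fintype.card_congr (symEquivDegreeEq σ d), Sym.card_sym_eq_choose]

theorem finrank_homogeneousSubmodule_fin_three (d : ℕ) :
    finrank K (homogeneousSubmodule (Fin 3) K d) = (d + 2).choose 2 := by
  rw [finrank_homogeneousSubmodule, Fintype.card_fin, ← Nat.choose_symm_add]
  congr 1
  omega

def mulHomogeneous {F : MvPolynomial σ K} {c : ℕ} (hF : F.IsHomogeneous c) (e : ℕ) :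
    homogeneousSubmodule σ K e →ₗ[K] homogeneousSubmodule σ K (c + e) :=
  (LinearMap.mulLeft K F).restrict fun _ hG => hF.mul hG

@[simp]
theorem coe_mulHomogeneous_apply {F : MvPolynomial σ K} {c : ℕ} (hF : F.IsHomogeneous c) {e : ℕ}
    (G : homogeneousSubmodule σ K e) : (mulHomogeneous hF e G : MvPolynomial σ K) = F * G :=
  rfl

theorem mulHomogeneous_injective {F : MvPolynomial σ K} {c : ℕ} (hF : F.IsHomogeneous c)
    (hF0 : F ≠ 0) (e : ℕ) : Function.Injective (mulHomogeneous hF e) := fun _ _ h =>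
  Subtype.ext <| mul_left_cancel₀ hF0 (congrArg Subtype.val h)

def evalHomogeneous (v : σ → K) (d : ℕ) : Dual K (homogeneousSubmodule σ K d) :=
  (aeval v).toLinearMap ∘ₗ (homogeneousSubmodule σ K d).subtype

@[simp]
theorem evalHomogeneous_apply (v : σ → K) {d : ℕ} (G : homogeneousSubmodule σ K d) :
    evalHomogeneous v d G = eval v G.1 :=
  rfl

end MvPolynomial

open MvPolynomial

theorem Subspace.card_add_finrank_le_of_linearIndependent {K V : Type*} [Field K]
    [AddCommGroup V] [Module K V] [FiniteDimensional K V] (W : Subspace K V) {ι : Type*}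
    [Fintype ι] {f : ι → Dual K V} (hf : LinearIndependent K f)
    (hfW : ∀ i, f i ∈ W.dualAnnihilator) :
    Fintype.card ι + finrank K W ≤ finrank K V := by
  have hcard := (LinearIndependent.of_comp (v := fun i => (⟨f i, hfW i⟩ : W.dualAnnihilator))
    W.dualAnnihilator.subtype hf).fintype_card_le_finrank
  linarith [W.finrank_add_finrank_dualAnnihilator_eq]

theorem eval_linForm {m : ℕ} (v x : Fin (m + 1) → ℂ) : eval x (linForm v) = ∑ i, v i * x i := by
  simp [linForm]

theorem eval_linForm_pow_comm {m : ℕ} (v w : Fin (m + 1) → ℂ) (d : ℕ) :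
    eval w (linForm v ^ d) = eval v (linForm w ^ d) := by
  simp only [map_pow, eval_linForm, mul_comm]

theorem linForm_isHomogeneous {m : ℕ} (v : Fin (m + 1) → ℂ) : (linForm v).IsHomogeneous 1 :=
  IsHomogeneous.sum _ _ _ fun i _ => by
    simpa using (isHomogeneous_C _ (v i)).mul (isHomogeneous_X ℂ i)

theorem linearIndependent_evalHomogeneous_of_linearIndependent_powRep {m d : ℕ} {ι : Type*}
    [Fintype ι] {p : ι → Pt m} (h : LinearIndependent ℂ fun i => powRep d (p i)) :
    LinearIndependent ℂ fun i => evalHomogeneous (p i).rep d := by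
  rw [Fintype.linearIndependent_iff] at h ⊢
  intro c hc
  refine h c (MvPolynomial.funext fun w => ?_)
  have hw := LinearMap.congr_fun hc ⟨linForm w ^ d, by simpa using (linForm_isHomogeneous w).pow d⟩
  simp only [LinearMap.sum_apply, LinearMap.smul_apply, evalHomogeneous_apply, smul_eq_mul,
    LinearMap.zero_apply] at hw
  simpa [powRep, smul_eval, eval_linForm_pow_comm w] using hw

theorem card_add_finrank_le_of_linearIndependent_powRep {m d : ℕ} {S : Finset (Pt m)}
    (hS : LinearIndependent ℂ fun P : S => powRep d P.1)
    (W : Subspace ℂ (homogeneousSubmodule (Fin (m + 1)) ℂ d))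
    (hW : ∀ G ∈ W, ∀ P ∈ S, eval P.rep G.1 = 0) :
    S.card + finrank ℂ W ≤ finrank ℂ (homogeneousSubmodule (Fin (m + 1)) ℂ d) := by
  simpa using W.card_add_finrank_le_of_linearIndependent
    (linearIndependent_evalHomogeneous_of_linearIndependent_powRep hS)
    fun P => (Submodule.mem_dualAnnihilator _).mpr fun G hG => hW G hG P.1 P.2

theorem card_le_three_mul_of_linearIndependent_powRep {F : MvPolynomial (Fin 3) ℂ} (hF0 : F ≠ 0)
    (hF : F.IsHomogeneous 3) {S : Finset (Pt 2)} (hSF : ∀ P ∈ S, eval P.rep F = 0) {b : ℕ}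
    (hb : 1 ≤ b) (hS : LinearIndependent ℂ fun P : S => powRep b P.1) : S.card ≤ 3 * b := by
  rcases le_or_gt b 2 with hb2 | hb3
  · have h := card_add_finrank_le_of_linearIndependent_powRep hS ⊥ (by simp)
    rw [finrank_bot, finrank_homogeneousSubmodule_fin_three] at h
    interval_cases b <;> simpa [Nat.choose] using h
  · obtain ⟨e, rfl⟩ : ∃ e, b = 3 + e := ⟨b - 3, by omega⟩
    have h := card_add_finrank_le_of_linearIndependent_powRep hS
      (LinearMap.range (mulHomogeneous hF e)) (by
        rintro _ ⟨G, rfl⟩ P hP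
        simp [hSF P hP])
    rw [LinearMap.finrank_range_of_inj (mulHomogeneous_injective hF hF0 e),
      finrank_homogeneousSubmodule_fin_three, finrank_homogeneousSubmodule_fin_three] at h
    have hchoose : (3 + e + 2).choose 2 = (e + 2).choose 2 + 3 * (3 + e) := by
      rw [show 3 + e + 2 = e + 2 + 1 + 1 + 1 by omega]
      simp only [Nat.choose_succ_succ', Nat.choose_one_right, Nat.choose_zero_right, zero_add]
      omega
    omega

theorem kruskalRank_le_of_card_le {m d N : ℕ} {Z : Finset (Pt m)}
    (h : ∀ S ⊆ Z, (LinearIndependent ℂ fun P : S => powRep d P.1) → S.card ≤ N) :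
    kruskalRank d Z ≤ N := by
  refine csSup_le ⟨0, Nat.zero_le _, fun S _ hS => ?_⟩ fun k ⟨hkZ, hk⟩ => ?_
  · rw [Finset.card_eq_zero.mp (Nat.le_zero.mp hS)]
    exact linearIndependent_empty_type
  · obtain ⟨S, hSZ, rfl⟩ := Finset.exists_subset_card_eq hkZ
    exact h S hSZ (hk S hSZ le_rfl)

theorem kruskalRank_le_three_mul_of_cubic {F : MvPolynomial (Fin 3) ℂ}
    (hF0 : F ≠ 0) (hF : F.IsHomogeneous 3) {A : Finset (Pt 2)}
    (hAF : ∀ P ∈ A, eval P.rep F = 0) {b : ℕ} (hb : 1 ≤ b) : kruskalRank b A ≤ 3 * b :=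
  kruskalRank_le_of_card_le fun _ hSA =>
    card_le_three_mul_of_linearIndependent_powRep hF0 hF (fun P hP => hAF P (hSA hP)) hb

theorem stmt16_general (n : ℕ) (A : Finset (Pt 2)) (F : MvPolynomial (Fin 3) ℂ) (hF0 : F ≠ 0)
    (hFhom : F.IsHomogeneous 3)
    (hAC : ∀ P ∈ A, eval (Projectivization.rep P) F = 0)
    (b₁ b₂ b₃ : ℕ) (hb₁ : 1 ≤ b₁) (hb₂ : 1 ≤ b₂) (hb₃ : 1 ≤ b₃)
    (hsum : b₁ + b₂ + b₃ = 8 + 2 * n) :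
    kruskalRank b₁ A + kruskalRank b₂ A + kruskalRank b₃ A ≤ 24 + 6 * n := by
  have h₁ := kruskalRank_le_three_mul_of_cubic hF0 hFhom hAC hb₁
  have h₂ := kruskalRank_le_three_mul_of_cubic hF0 hFhom hAC hb₂
  have h₃ := kruskalRank_le_three_mul_of_cubic hF0 hFhom hAC hb₃
  omega

/-- Fix `n` and `d = 8+2n`. If `A ⊂ ℙ²` lies on a smooth plane cubic, then
for every partition `d = b₁+b₂+b₃` with `bᵢ ≥ 1` one has
`(k_{b₁}(A) + k_{b₂}(A) + k_{b₃}(A) - 2)/2 ≤ 11 + 3n`, i.e.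
`k_{b₁}(A) + k_{b₂}(A) + k_{b₃}(A) ≤ 24 + 6n`. -/
theorem stmt16 (n : ℕ) (A : Finset (Pt 2)) (F : MvPolynomial (Fin 3) ℂ) (hF0 : F ≠ 0)
    (hFhom : F.IsHomogeneous 3)
    (hsmooth : ∀ v : Fin 3 → ℂ, v ≠ 0 → eval v F = 0 →
      ∃ i : Fin 3, eval v (pderiv i F) ≠ 0)
    (hAC : ∀ P ∈ A, eval (Projectivization.rep P) F = 0)
    (b₁ b₂ b₃ : ℕ) (hb₁ : 1 ≤ b₁) (hb₂ : 1 ≤ b₂) (hb₃ : 1 ≤ b₃)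
    (hsum : b₁ + b₂ + b₃ = 8 + 2 * n) :
    kruskalRank b₁ A + kruskalRank b₂ A + kruskalRank b₃ A ≤ 24 + 6 * n :=
  stmt16_general n A F hF0 hFhom hAC b₁ b₂ b₃ hb₁ hb₂ hb₃ hsum

end
end
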